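/- arXiv:1904.11646 — 4 statements merged into one kernel-verified Lean document; each statement's English description precedes it below -/
import Mathlib

section
/- If the upper triangular subalgebras Ã₁,…,Ãₙ are free with respect to Ẽ over B̃, then A₁,…,Aₙ are infinitesimally free with respect to (E, E'). -/
/-
Given centred elements `aⱼ ∈ Aᵢⱼ`, the matrices `!![aⱼ, -E' aⱼ; 0, aⱼ]` lie in `Ãᵢⱼ` and are `Ẽ`-centred,
because `E` fixes `E' aⱼ ∈ B`. The product of upper triangular matrices with constant diagonal has the
product of the diagonal entries on the diagonal and the Leibniz sum `∑ⱼ a₁ ⋯ a'ⱼ ⋯ aₘ` in the corner, so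
freeness over `B̃` says exactly that `E (a₁ ⋯ aₘ) = 0` and that `E'` of the product is the required sum.
-/

/-- The upper triangular conditional expectation `Ẽ` read off from matrix entries. -/
def Et {A : Type*} [Ring A] [Algebra ℂ A] (E E' : A →ₗ[ℂ] A)
    (M : Matrix (Fin 2) (Fin 2) A) : Matrix (Fin 2) (Fin 2) A :=
  !![E (M 0 0), E (M 0 1) + E' (M 0 0); 0, E (M 0 0)]

/-- Infinitesimal freeness of the subalgebras `𝒜 i` with respect to `(E, E')`. -/
def InfinitesimallyFree {A : Type*} [Ring A] [Algebra ℂ A] (E E' : A →ₗ[ℂ] A)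
    {n : ℕ} (𝒜 : Fin n → Subalgebra ℂ A) : Prop :=
  ∀ (m : ℕ) (i : Fin (m + 1) → Fin n),
    (∀ j : Fin m, i j.castSucc ≠ i j.succ) →
    ∀ a : Fin (m + 1) → A, (∀ j, a j ∈ 𝒜 (i j)) → (∀ j, E (a j) = 0) →
      E (List.ofFn a).prod = 0 ∧
      E' (List.ofFn a).prod =
        ∑ j : Fin (m + 1),
          E (((List.ofFn a).take j).prod * E' (a j) * ((List.ofFn a).drop (j + 1)).prod)

/-- Freeness of the upper triangular subalgebras `Ãᵢ` with respect to `Ẽ` over `B̃`. -/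
def TildeFree {A : Type*} [Ring A] [Algebra ℂ A] (E E' : A →ₗ[ℂ] A)
    {n : ℕ} (𝒜 : Fin n → Subalgebra ℂ A) : Prop :=
  ∀ (m : ℕ) (i : Fin (m + 1) → Fin n),
    (∀ j : Fin m, i j.castSucc ≠ i j.succ) →
    ∀ a a' : Fin (m + 1) → A,
      (∀ j, a j ∈ 𝒜 (i j)) → (∀ j, a' j ∈ 𝒜 (i j)) →
      (∀ j, Et E E' (!![a j, a' j; 0, a j]) = 0) →
      Et E E'
        (List.ofFn fun j => (!![a j, a' j; 0, a j] : Matrix (Fin 2) (Fin 2) A)).prod = 0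

section Triangular

variable {R : Type*} [Ring R]

theorem fin_two_triangular_eq_zero_iff {x y : R} : !![x, y; 0, x] = 0 ↔ x = 0 ∧ y = 0 := by
  rw [← Matrix.ext_iff, Fin.forall_fin_two, Fin.forall_fin_two, Fin.forall_fin_two]
  simp only [Matrix.of_apply, Matrix.cons_val', Matrix.cons_val_zero, Matrix.cons_val_one,
    Matrix.empty_val', Matrix.cons_val_fin_one, Matrix.zero_apply]
  tauto

theorem sum_take_mul_drop_succ {k : ℕ} (a a' : Fin (k + 1) → R) :
    ∑ j : Fin (k + 1), ((List.ofFn a).take j).prod * a' j * ((List.ofFn a).drop (j + 1)).prod =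
      a 0 * ∑ j : Fin k, ((List.ofFn fun i => a i.succ).take j).prod * a' j.succ *
          ((List.ofFn fun i => a i.succ).drop (j + 1)).prod +
        a' 0 * (List.ofFn fun i => a i.succ).prod := by
  rw [Fin.sum_univ_succ, Finset.mul_sum, add_comm, List.ofFn_succ]
  simp only [Fin.val_zero, List.take_zero, List.prod_nil, one_mul, Fin.val_succ,
    List.take_succ_cons, List.prod_cons, List.drop_succ_cons, List.drop_zero, zero_add, mul_assoc]

theorem prod_ofFn_triangular {k : ℕ} (a a' : Fin k → R) :
    (List.ofFn fun j => !![a j, a' j; 0, a j]).prod =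
      !![(List.ofFn a).prod,
        ∑ j : Fin k, ((List.ofFn a).take j).prod * a' j * ((List.ofFn a).drop (j + 1)).prod;
        0, (List.ofFn a).prod] := by
  induction k with
  | zero => simp [Matrix.one_fin_two]
  | succ k ih =>
    rw [List.ofFn_succ, List.prod_cons, ih (fun i => a i.succ) (fun i => a' i.succ),
      sum_take_mul_drop_succ, Matrix.mul_fin_two, List.ofFn_succ (f := a), List.prod_cons]
    simp

end Triangular

theorem Et_triangular {A : Type*} [Ring A] [Algebra ℂ A] (E E' : A →ₗ[ℂ] A) (x y : A) :
    Et E E' !![x, y; 0, x] = !![E x, E y + E' x; 0, E x] := by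
  rfl

theorem tilde_free_implies_inf_free_general {A : Type*} [Ring A] [Algebra ℂ A]
    (B : Subalgebra ℂ A) (E E' : A →ₗ[ℂ] A)
    (hE'_mem : ∀ a, E' a ∈ B)
    (hE_id : ∀ b ∈ B, E b = b)
    {n : ℕ} (𝒜 : Fin n → Subalgebra ℂ A) (h𝒜 : ∀ i, B ≤ 𝒜 i) :
    TildeFree E E' 𝒜 → InfinitesimallyFree E E' 𝒜 := by
  intro hfree m i hi a ha hEa
  have hc_mem : ∀ j, -E' (a j) ∈ 𝒜 (i j) := fun j => neg_mem (h𝒜 (i j) (hE'_mem (a j)))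
  have hcentred : ∀ j, Et E E' !![a j, -E' (a j); 0, a j] = 0 := fun j => by
    rw [Et_triangular, fin_two_triangular_eq_zero_iff, map_neg, hE_id _ (hE'_mem _), hEa]
    exact ⟨rfl, neg_add_cancel _⟩
  have h := hfree m i hi a (fun j => -E' (a j)) ha hc_mem hcentred
  rw [prod_ofFn_triangular, Et_triangular, fin_two_triangular_eq_zero_iff] at h
  obtain ⟨hprod, hcorner⟩ := h
  refine ⟨hprod, ?_⟩
  rw [eq_neg_of_add_eq_zero_right hcorner, map_sum, ← Finset.sum_neg_distrib]
  simp only [mul_neg, neg_mul, map_neg, neg_neg]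

/-- If the upper triangular subalgebras are free w.r.t. Ẽ over B̃ then the subalgebras are infinitesimally free w.r.t. (E,E'). -/
theorem tilde_free_implies_inf_free {A : Type*} [Ring A] [Algebra ℂ A]
    (B : Subalgebra ℂ A) (E E' : A →ₗ[ℂ] A)
    (hE_mem : ∀ a, E a ∈ B) (hE'_mem : ∀ a, E' a ∈ B)
    (hE_id : ∀ b ∈ B, E b = b)
    (hE_bimod : ∀ b₁ ∈ B, ∀ b₂ ∈ B, ∀ a, E (b₁ * a * b₂) = b₁ * E a * b₂)
    (hE'_one : E' 1 = 0)
    (hE'_bimod : ∀ b₁ ∈ B, ∀ b₂ ∈ B, ∀ a, E' (b₁ * a * b₂) = b₁ * E' a * b₂)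
    {n : ℕ} (𝒜 : Fin n → Subalgebra ℂ A) (h𝒜 : ∀ i, B ≤ 𝒜 i) :
    TildeFree E E' 𝒜 → InfinitesimallyFree E E' 𝒜 :=
  tilde_free_implies_inf_free_general B E E' hE'_mem hE_id 𝒜 h𝒜
end

section
/- Subalgebras A₁,…,Aₙ containing B are infinitesimally free with respect to (E, E') if and only if Ã₁,…,Ãₙ are free with respect to Ẽ over B̃. -/
section UpperTriangular

variable {A : Type*} [Ring A]

theorem upperTriangular_mul (x y x' y' : A) :
    !![x, y; 0, x] * !![x', y'; 0, x'] = !![x * x', x * y' + y * x'; 0, x * x'] := by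
  simp

theorem prod_ofFn_upperTriangular {m : ℕ} (a a' : Fin m → A) :
    (List.ofFn fun j => !![a j, a' j; 0, a j]).prod =
      !![(List.ofFn a).prod,
        ∑ j : Fin m, ((List.ofFn a).take j).prod * a' j * ((List.ofFn a).drop (j + 1)).prod;
        0, (List.ofFn a).prod] := by
  induction m with
  | zero => simp [Matrix.one_fin_two]
  | succ m ih =>
    simp only [List.ofFn_succ, List.prod_cons, ih, upperTriangular_mul, Fin.sum_univ_succ]
    simp [Finset.mul_sum, mul_assoc]
    exact add_comm _ _

end UpperTriangular

theorem List.prod_ofFn_update {M : Type*} [Monoid M] {m : ℕ} (a : Fin m → M) (j : Fin m) (c : M) :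
    (List.ofFn (Function.update a j c)).prod =
      ((List.ofFn a).take j).prod * c * ((List.ofFn a).drop (j + 1)).prod := by
  have : List.ofFn (Function.update a j c) = (List.ofFn a).set j c := by
    apply List.ext_getElem (by simp)
    intro k _ _
    simp only [List.getElem_ofFn, List.getElem_set, Function.update_apply, Fin.ext_iff]
    by_cases hk : k = j <;> simp [hk, eq_comm]
  simp [this, List.prod_set]

section Freeness

variable {A : Type*} [Ring A] [Algebra ℂ A] {E E' : A →ₗ[ℂ] A}

theorem Et_eq_zero_iff (M : Matrix (Fin 2) (Fin 2) A) :
    Et E E' M = 0 ↔ E (M 0 0) = 0 ∧ E (M 0 1) + E' (M 0 0) = 0 := by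
  rw [← Matrix.ext_iff, Fin.forall_fin_two, Fin.forall_fin_two, Fin.forall_fin_two]
  simp [Et, and_comm]

theorem Et_prod_ofFn_upperTriangular_eq_zero_iff {m : ℕ} (a a' : Fin m → A) :
    Et E E' (List.ofFn fun j => !![a j, a' j; 0, a j]).prod = 0 ↔
      E (List.ofFn a).prod = 0 ∧
        ∑ j : Fin m, E (((List.ofFn a).take j).prod * a' j * ((List.ofFn a).drop (j + 1)).prod) +
          E' (List.ofFn a).prod = 0 := by
  simp [prod_ofFn_upperTriangular, Et_eq_zero_iff, map_sum]

variable {n : ℕ} {𝒜 : Fin n → Subalgebra ℂ A}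

theorem InfinitesimallyFree.E_prod_take_mul_drop_eq_zero (hfree : InfinitesimallyFree E E' 𝒜)
    {m : ℕ} {i : Fin (m + 1) → Fin n} (hi : ∀ j : Fin m, i j.castSucc ≠ i j.succ)
    {a : Fin (m + 1) → A} (ha : ∀ j, a j ∈ 𝒜 (i j)) (hEa : ∀ j, E (a j) = 0)
    (j : Fin (m + 1)) {x : A} (hx : x ∈ 𝒜 (i j)) (hEx : E x = 0) :
    E (((List.ofFn a).take j).prod * x * ((List.ofFn a).drop (j + 1)).prod) = 0 := by
  rw [← List.prod_ofFn_update]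
  refine (hfree m i hi _ (fun k => ?_) (fun k => ?_)).1
  · rcases eq_or_ne k j with rfl | hk
    · simpa using hx
    · simpa [hk] using ha k
  · rcases eq_or_ne k j with rfl | hk
    · simpa using hEx
    · simpa [hk] using hEa k

variable (hE'_mem : ∀ i a, E' a ∈ 𝒜 i) (hEE' : ∀ a, E (E' a) = E' a)
include hE'_mem hEE'

theorem InfinitesimallyFree.tildeFree (hfree : InfinitesimallyFree E E' 𝒜) :
    TildeFree E E' 𝒜 := by
  intro m i hi a a' ha ha' hEt
  simp only [Et_eq_zero_iff, Matrix.of_apply, Matrix.cons_val', Matrix.cons_val_zero,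
    Matrix.cons_val_one, Matrix.empty_val', Matrix.cons_val_fin_one] at hEt
  obtain ⟨hEa, hE'a⟩ := forall_and.mp hEt
  obtain ⟨hprod, hderiv⟩ := hfree m i hi a ha hEa
  refine (Et_prod_ofFn_upperTriangular_eq_zero_iff a a').mpr ⟨hprod, ?_⟩
  rw [hderiv, ← Finset.sum_add_distrib]
  refine Finset.sum_eq_zero fun j _ => ?_
  rw [← map_add, ← add_mul, ← mul_add]
  exact hfree.E_prod_take_mul_drop_eq_zero hi ha hEa j (add_mem (ha' j) (hE'_mem _ _))
    (by rw [map_add, hEE', hE'a])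

theorem TildeFree.infinitesimallyFree (hfree : TildeFree E E' 𝒜) :
    InfinitesimallyFree E E' 𝒜 := by
  intro m i hi a ha hEa
  have hEt (j : Fin (m + 1)) : Et E E' !![a j, -E' (a j); 0, a j] = 0 := by
    simp [Et_eq_zero_iff, hEa, hEE']
  obtain ⟨hprod, hderiv⟩ := (Et_prod_ofFn_upperTriangular_eq_zero_iff a _).mp
    (hfree m i hi a _ ha (fun j => neg_mem (hE'_mem _ _)) hEt)
  refine ⟨hprod, ?_⟩
  simpa [add_comm, add_eq_zero_iff_eq_neg] using hderiv

end Freeness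

theorem inf_free_iff_tilde_free_general {A : Type*} [Ring A] [Algebra ℂ A]
    (B : Subalgebra ℂ A) (E E' : A →ₗ[ℂ] A)
    (hE'_mem : ∀ a, E' a ∈ B)
    (hE_id : ∀ b ∈ B, E b = b)
    {n : ℕ} (𝒜 : Fin n → Subalgebra ℂ A) (h𝒜 : ∀ i, B ≤ 𝒜 i) :
    InfinitesimallyFree E E' 𝒜 ↔ TildeFree E E' 𝒜 := by
  have hE'_mem𝒜 (i : Fin n) (a : A) : E' a ∈ 𝒜 i := h𝒜 i (hE'_mem a)
  have hEE' (a : A) : E (E' a) = E' a := hE_id _ (hE'_mem a)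
  exact ⟨fun h => h.tildeFree hE'_mem𝒜 hEE', fun h => h.infinitesimallyFree hE'_mem𝒜 hEE'⟩

/-- The subalgebras are infinitesimally free w.r.t. (E,E') iff the upper triangular subalgebras are free w.r.t. Ẽ over B̃. -/
theorem inf_free_iff_tilde_free {A : Type*} [Ring A] [Algebra ℂ A]
    (B : Subalgebra ℂ A) (E E' : A →ₗ[ℂ] A)
    (hE_mem : ∀ a, E a ∈ B) (hE'_mem : ∀ a, E' a ∈ B)
    (hE_id : ∀ b ∈ B, E b = b)
    (hE_bimod : ∀ b₁ ∈ B, ∀ b₂ ∈ B, ∀ a, E (b₁ * a * b₂) = b₁ * E a * b₂)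
    (hE'_one : E' 1 = 0)
    (hE'_bimod : ∀ b₁ ∈ B, ∀ b₂ ∈ B, ∀ a, E' (b₁ * a * b₂) = b₁ * E' a * b₂)
    {n : ℕ} (𝒜 : Fin n → Subalgebra ℂ A) (h𝒜 : ∀ i, B ≤ 𝒜 i) :
    InfinitesimallyFree E E' 𝒜 ↔ TildeFree E E' 𝒜 :=
  inf_free_iff_tilde_free_general B E E' hE'_mem hE_id 𝒜 h𝒜
end

section
/- In an operator-valued C*-probability space with infinitesimal structure, the Cauchy transform of the upper triangular element X = [[x,0],[0,x]] at B = [[b,c],[0,b]] equals [[G_x(b), G'_x(b)(c) + g_x(b)], [0, G_x(b)]], where G_x(b) = E[(b-x)⁻¹], g_x(b) = E'[(b-x)⁻¹], and G'_x(b)(c) = -E[(b-x)⁻¹ c (b-x)⁻¹]. -/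
namespace Matrix

theorem sub_fin_two {R : Type*} [Sub R] (a₁₁ a₁₂ a₂₁ a₂₂ b₁₁ b₁₂ b₂₁ b₂₂ : R) :
    !![a₁₁, a₁₂; a₂₁, a₂₂] - !![b₁₁, b₁₂; b₂₁, b₂₂] =
      !![a₁₁ - b₁₁, a₁₂ - b₁₂; a₂₁ - b₂₁, a₂₂ - b₂₂] := by
  simp

theorem inverse_upperTriangular_fin_two {R : Type*} [Ring R] {a d : R} (ha : IsUnit a)
    (hd : IsUnit d) (c : R) :
    Ring.inverse !![a, c; 0, d] =
      !![Ring.inverse a, -(Ring.inverse a * c * Ring.inverse d); 0, Ring.inverse d] := by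
  obtain ⟨u, rfl⟩ := ha
  obtain ⟨v, rfl⟩ := hd
  simp only [Ring.inverse_unit]
  let T : (Matrix (Fin 2) (Fin 2) R)ˣ :=
    { val := !![↑u, c; 0, ↑v]
      inv := !![↑u⁻¹, -(↑u⁻¹ * c * ↑v⁻¹); 0, ↑v⁻¹]
      val_inv := by simp [one_fin_two, ← mul_assoc]
      inv_val := by simp [one_fin_two, mul_assoc] }
  exact Ring.inverse_unit T

end Matrix

theorem Et_cauchy_transform_general {A : Type*} [NormedRing A] [NormedAlgebra ℂ A]
    (E E' : A →ₗ[ℂ] A) (x b c : A) (hinv : IsUnit (b - x)) :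
    Et E E' (Ring.inverse (!![b, c; 0, b] - !![x, 0; 0, x] : Matrix (Fin 2) (Fin 2) A))
      = !![E (Ring.inverse (b - x)),
            -(E (Ring.inverse (b - x) * c * Ring.inverse (b - x))) +
              E' (Ring.inverse (b - x));
            0, E (Ring.inverse (b - x))] := by
  rw [Matrix.sub_fin_two, sub_zero, sub_zero, Matrix.inverse_upperTriangular_fin_two hinv hinv]
  simp [Et]

/-- In a C*-operator-valued infinitesimal probability space, the Cauchy transform of
`X = [[x,0],[0,x]]` at `B = [[b,c],[0,b]]` equals
`[[G_x(b), G'_x(b)(c) + g_x(b)],[0, G_x(b)]]`, where `G_x(b) = E[(b-x)⁻¹]`,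
`g_x(b) = E'[(b-x)⁻¹]` and `G'_x(b)(c) = -E[(b-x)⁻¹ c (b-x)⁻¹]`. -/
theorem Et_cauchy_transform {A : Type*} [NormedRing A] [StarRing A] [CStarRing A]
    [NormedAlgebra ℂ A] [CompleteSpace A] [StarModule ℂ A]
    (B : Subalgebra ℂ A) (E E' : A →ₗ[ℂ] A)
    (hE_mem : ∀ a, E a ∈ B) (hE'_mem : ∀ a, E' a ∈ B)
    (hE_id : ∀ b ∈ B, E b = b)
    (hE_bimod : ∀ b₁ ∈ B, ∀ b₂ ∈ B, ∀ a, E (b₁ * a * b₂) = b₁ * E a * b₂)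
    (hE'_one : E' 1 = 0)
    (hE'_bimod : ∀ b₁ ∈ B, ∀ b₂ ∈ B, ∀ a, E' (b₁ * a * b₂) = b₁ * E' a * b₂)
    (x b c : A) (hx : IsSelfAdjoint x) (hb : b ∈ B) (hc : c ∈ B)
    (hinv : IsUnit (b - x)) :
    Et E E' (Ring.inverse (!![b, c; 0, b] - !![x, 0; 0, x] : Matrix (Fin 2) (Fin 2) A))
      = !![E (Ring.inverse (b - x)),
            -(E (Ring.inverse (b - x) * c * Ring.inverse (b - x))) +
              E' (Ring.inverse (b - x));
            0, E (Ring.inverse (b - x))] :=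
  Et_cauchy_transform_general E E' x b c hinv
end

section
/- If a linear functional φ' on a unital C*-algebra is selfadjoint (φ'(a*) = conj(φ'(a))) and φ'(1) = 0, then φ' can be written as c(φ₁ - φ₂) for some real c ≥ 0 and states φ₁, φ₂ (positive unital linear functionals). -/
/-!
On the real space of selfadjoint elements `φ'` is real-valued and bounded by `N = 2 (‖φ'‖ + 1)`.
On pairs of selfadjoint elements, the functional `(x, -x) + t (1, 1) ↦ φ' x + t N` is nonnegative
at the pairs of positive elements in its domain, because `-t ≤ x ≤ t` forces `‖x‖ ≤ t`. Riesz's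
extension theorem extends it to a functional `g` that is nonnegative at all pairs of positive
elements; then `g₁ = g (·, 0)` and `g₂ = g (0, ·)` are positive, `g₁ - g₂ = φ'` and
`g₁ 1 + g₂ 1 = N`. As `φ' 1 = 0`, both masses equal `N / 2`, and the complexifications of `g₁, g₂`
divided by `N / 2` are the two states.
-/

open Complex
open scoped ComplexOrder ComplexStarModule

theorem riesz_extension_of_injective {E W : Type*} [AddCommGroup E] [Module ℝ E]
    [AddCommGroup W] [Module ℝ W] (s : PointedCone ℝ E) (L : W →ₗ[ℝ] E)
    (hL : Function.Injective L) (F : W →ₗ[ℝ] ℝ) (nonneg : ∀ w, L w ∈ s → 0 ≤ F w)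
    (dense : ∀ e, ∃ w, L w + e ∈ s) :
    ∃ g : E →ₗ[ℝ] ℝ, g ∘ₗ L = F ∧ ∀ x ∈ s, 0 ≤ g x := by
  let e := LinearEquiv.ofInjective L hL
  obtain ⟨g, hgF, hg⟩ := riesz_extension s ⟨LinearMap.range L, F ∘ₗ e.symm.toLinearMap⟩
    (fun x hx => by
      obtain ⟨w, rfl⟩ := e.surjective x
      simpa using nonneg w hx)
    (fun y => by
      obtain ⟨w, hw⟩ := dense y
      exact ⟨e w, hw⟩)
  refine ⟨g, LinearMap.ext fun w => ?_, hg⟩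
  simpa [e] using hgF (e w)

namespace LinearMap

section Complexify

variable {A : Type*} [AddCommGroup A] [StarAddMonoid A] [Module ℂ A] [StarModule ℂ A]

noncomputable def complexifyOfSelfAdjoint (g : selfAdjoint A →ₗ[ℝ] ℝ) : A →ₗ[ℂ] ℂ where
  toFun a := g (ℜ a) + g (ℑ a) * I
  map_add' a b := by simp only [map_add]; push_cast; ring
  map_smul' z a := by
    simp only [realPart_smul, imaginaryPart_smul, map_sub, map_add, map_smul, smul_eq_mul,
      RingHom.id_apply]
    apply Complex.ext <;> simp

lemma complexifyOfSelfAdjoint_apply (g : selfAdjoint A →ₗ[ℝ] ℝ) (a : A) :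
    g.complexifyOfSelfAdjoint a = g (ℜ a) + g (ℑ a) * I := rfl

@[simp]
lemma complexifyOfSelfAdjoint_coe (g : selfAdjoint A →ₗ[ℝ] ℝ) (x : selfAdjoint A) :
    g.complexifyOfSelfAdjoint x = g x := by
  simp [complexifyOfSelfAdjoint_apply]

lemma complexifyOfSelfAdjoint_sub (g₁ g₂ : selfAdjoint A →ₗ[ℝ] ℝ) :
    (g₁ - g₂).complexifyOfSelfAdjoint =
      g₁.complexifyOfSelfAdjoint - g₂.complexifyOfSelfAdjoint := by
  ext a
  simp only [complexifyOfSelfAdjoint_apply, sub_apply]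
  push_cast
  ring

noncomputable def selfAdjointRe (φ : A →ₗ[ℂ] ℂ) : selfAdjoint A →ₗ[ℝ] ℝ where
  toFun x := (φ x).re
  map_add' x y := by simp
  map_smul' r x := by simp

lemma complexifyOfSelfAdjoint_selfAdjointRe (φ : A →ₗ[ℂ] ℂ)
    (hφ : ∀ a, φ (star a) = starRingEnd ℂ (φ a)) :
    φ.selfAdjointRe.complexifyOfSelfAdjoint = φ := by
  have hreal : ∀ x : selfAdjoint A, ((φ x).re : ℂ) = φ x := fun x =>
    Complex.conj_eq_iff_re.1 (by rw [← hφ, x.2.star_eq])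
  ext a
  conv_rhs => rw [← realPart_add_I_smul_imaginaryPart a]
  simp [complexifyOfSelfAdjoint_apply, selfAdjointRe, hreal, mul_comm]

end Complexify

lemma complexifyOfSelfAdjoint_nonneg {A : Type*} [NonUnitalRing A] [StarRing A] [Module ℂ A]
    [StarModule ℂ A] [PartialOrder A] [StarOrderedRing A] (g : selfAdjoint A →ₗ[ℝ] ℝ)
    (hg : ∀ x, 0 ≤ x → 0 ≤ g x) {a : A} (ha : 0 ≤ a) : 0 ≤ g.complexifyOfSelfAdjoint a := by
  rw [nonneg_iff_realPart_imaginaryPart] at ha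
  simpa [complexifyOfSelfAdjoint_apply, ha.2] using hg _ ha.1

end LinearMap

section CStarAlgebra

variable {A : Type*} [CStarAlgebra A] [PartialOrder A] [StarOrderedRing A]

lemma selfAdjoint.norm_le_iff [Nontrivial A] (x : selfAdjoint A) (t : ℝ) :
    ‖(x : A)‖ ≤ t ↔ 0 ≤ x + t • 1 ∧ 0 ≤ -x + t • 1 := by
  have hx : IsSelfAdjoint (x : A) := x.2
  change _ ↔ (0 : A) ≤ x + t • 1 ∧ (0 : A) ≤ -x + t • 1
  rw [← Algebra.algebraMap_eq_smul_one, ← neg_le_iff_add_nonneg, neg_add_eq_sub, sub_nonneg]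
  refine ⟨fun h => ⟨?_, ?_⟩, fun ⟨h₁, h₂⟩ => ?_⟩
  · exact (neg_le_neg (algebraMap_mono A h)).trans hx.neg_algebraMap_norm_le_self
  · exact hx.le_algebraMap_norm_self.trans (algebraMap_mono A h)
  · rcases CStarAlgebra.norm_or_neg_norm_mem_spectrum hx with h | h
    · exact (le_algebraMap_iff_spectrum_le hx).1 h₂ _ h
    · rw [← map_neg] at h₁
      linarith [(algebraMap_le_iff_le_spectrum hx).1 h₁ _ h]

theorem exists_nonneg_functionals_sub_eq [Nontrivial A] (f : selfAdjoint A →ₗ[ℝ] ℝ) {N : ℝ}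
    (hf : ∀ x, |f x| ≤ N * ‖(x : A)‖) :
    ∃ g₁ g₂ : selfAdjoint A →ₗ[ℝ] ℝ, (∀ x, 0 ≤ x → 0 ≤ g₁ x) ∧ (∀ x, 0 ≤ x → 0 ≤ g₂ x) ∧
      g₁ - g₂ = f ∧ g₁ 1 + g₂ 1 = N := by
  let P : PointedCone ℝ (selfAdjoint A) :=
    (PointedCone.positive ℝ A).comap ⟨⟨Subtype.val, fun _ _ => rfl⟩, fun _ _ => rfl⟩
  have hP : ∀ x, x ∈ P ↔ 0 ≤ x := fun _ => Iff.rfl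
  let L : selfAdjoint A × ℝ →ₗ[ℝ] selfAdjoint A × selfAdjoint A :=
    (LinearMap.fst ℝ _ ℝ + (LinearMap.snd ℝ (selfAdjoint A) ℝ).smulRight 1).prod
      (-LinearMap.fst ℝ _ ℝ + (LinearMap.snd ℝ (selfAdjoint A) ℝ).smulRight 1)
  have hL : ∀ w, L w = (w.1 + w.2 • 1, -w.1 + w.2 • 1) := fun _ => rfl
  have hN : 0 ≤ N := by simpa using (abs_nonneg _).trans (hf 1)
  have hinj : Function.Injective L := by
    rw [injective_iff_map_eq_zero]
    rintro ⟨x, t⟩ h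
    obtain ⟨h₁, h₂⟩ := Prod.mk_eq_zero.1 ((hL _).symm.trans h)
    have ht : t = 0 := by
      have : (t + t) • (1 : selfAdjoint A) = 0 := by
        linear_combination (norm := module) h₁ + h₂
      linarith [(smul_eq_zero.1 this).resolve_right
        fun h => one_ne_zero (congrArg Subtype.val h)]
    simp_all
  have nonneg : ∀ w, L w ∈ P.prod P → 0 ≤ f w.1 + N * w.2 := by
    rintro ⟨x, t⟩ ⟨h₁, h₂⟩
    have hx := (selfAdjoint.norm_le_iff x t).2 ⟨h₁, h₂⟩
    nlinarith [hf x, neg_abs_le (f x)]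
  have dense : ∀ e, ∃ w, L w + e ∈ P.prod P := by
    rintro ⟨a, b⟩
    refine ⟨(0, ‖(a : A)‖ + ‖(b : A)‖), (hP _).2 ?_, (hP _).2 ?_⟩
    · simpa [hL, add_comm] using
        ((selfAdjoint.norm_le_iff a _).1 (le_add_of_nonneg_right (norm_nonneg (b : A)))).1
    · simpa [hL, add_comm] using
        ((selfAdjoint.norm_le_iff b _).1 (le_add_of_nonneg_left (norm_nonneg (a : A)))).1
  obtain ⟨g, hgL, hg⟩ := riesz_extension_of_injective (P.prod P) L hinj
    (f ∘ₗ LinearMap.fst ℝ _ ℝ + N • LinearMap.snd ℝ (selfAdjoint A) ℝ) nonneg dense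
  have hgL' : ∀ x t, g (x + t • 1, -x + t • 1) = f x + N * t := fun x t => by
    simpa [hL] using LinearMap.congr_fun hgL (x, t)
  refine ⟨g ∘ₗ LinearMap.inl ℝ _ _, g ∘ₗ LinearMap.inr ℝ _ _, ?_, ?_, ?_, ?_⟩
  · exact fun x hx => hg _ ⟨(hP x).2 hx, (hP 0).2 le_rfl⟩
  · exact fun x hx => hg _ ⟨(hP 0).2 le_rfl, (hP x).2 hx⟩
  · ext x
    simpa [← map_sub] using hgL' x 0
  · simpa [← map_add] using hgL' 0 1

lemma exists_state_mul_eq_complexifyOfSelfAdjoint (g : selfAdjoint A →ₗ[ℝ] ℝ)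
    (hg : ∀ x, 0 ≤ x → 0 ≤ g x) {c : ℝ} (hc : 0 < c) (hg1 : g 1 = c) :
    ∃ ρ : A →L[ℂ] ℂ, ρ 1 = 1 ∧ (∀ a, 0 ≤ a → 0 ≤ ρ a) ∧
      ∀ a, c * ρ a = g.complexifyOfSelfAdjoint a := by
  let ψ : A →ₚ[ℂ] ℂ := .mk₀ g.complexifyOfSelfAdjoint fun _ => g.complexifyOfSelfAdjoint_nonneg hg
  have hψ : ∀ a, ψ a = g.complexifyOfSelfAdjoint a := fun _ => rfl
  have hc' : (c : ℂ) ≠ 0 := by exact_mod_cast hc.ne'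
  refine ⟨(c⁻¹ : ℂ) • ⟨ψ.toLinearMap, map_continuous ψ⟩, ?_, fun a ha => ?_, fun a => ?_⟩
  · have h1 : ψ 1 = c := by
      rw [hψ, ← selfAdjoint.val_one, LinearMap.complexifyOfSelfAdjoint_coe, hg1]
    simp [h1, hc']
  · have : (0 : ℂ) ≤ (c⁻¹ : ℂ) := by exact_mod_cast (inv_pos.2 hc).le
    simpa using mul_nonneg this (ψ.map_nonneg ha)
  · simp [hψ, hc']

end CStarAlgebra

/-- A selfadjoint bounded linear functional `φ'` on a unital C*-algebra with `φ'(1) = 0`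
can be written as `c(φ₁ - φ₂)` for some real `c ≥ 0` and states `φ₁, φ₂`. -/
theorem selfadjoint_functional_jordan_decomposition {M : Type*} [NormedRing M]
    [StarRing M] [CStarRing M] [NormedAlgebra ℂ M] [CompleteSpace M] [StarModule ℂ M]
    [Nontrivial M]
    (φ' : M →L[ℂ] ℂ) (hsa : ∀ a, φ' (star a) = starRingEnd ℂ (φ' a))
    (h1 : φ' 1 = 0) :
    ∃ (c : ℝ) (φ₁ φ₂ : M →L[ℂ] ℂ), 0 ≤ c ∧
      φ₁ 1 = 1 ∧ φ₂ 1 = 1 ∧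
      (∀ a, 0 ≤ (φ₁ (star a * a)).re ∧ (φ₁ (star a * a)).im = 0) ∧
      (∀ a, 0 ≤ (φ₂ (star a * a)).re ∧ (φ₂ (star a * a)).im = 0) ∧
      ∀ a, φ' a = c * (φ₁ a - φ₂ a) := by
  let _ : CStarAlgebra M := {}
  let _ := CStarAlgebra.spectralOrder M
  have := CStarAlgebra.spectralOrderedRing M
  -- `+ 1` keeps `c` positive, so that `g₁, g₂` can be normalised by it
  set c := ‖φ'‖ + 1
  have hc : 0 < c := by positivity
  let f := (φ' : M →ₗ[ℂ] ℂ).selfAdjointRe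
  have hf : ∀ x, |f x| ≤ 2 * c * ‖(x : M)‖ := fun x =>
    (abs_re_le_norm _).trans <| (φ'.le_opNorm x).trans <| by gcongr; linarith
  obtain ⟨g₁, g₂, hg₁, hg₂, hsub, hsum⟩ := exists_nonneg_functionals_sub_eq f hf
  have hg_one : g₁ 1 - g₂ 1 = 0 := by
    rw [← LinearMap.sub_apply, hsub]
    simp [f, LinearMap.selfAdjointRe, h1]
  obtain ⟨φ₁, h1₁, hpos₁, hφ₁⟩ :=
    exists_state_mul_eq_complexifyOfSelfAdjoint g₁ hg₁ hc (by linarith)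
  obtain ⟨φ₂, h1₂, hpos₂, hφ₂⟩ :=
    exists_state_mul_eq_complexifyOfSelfAdjoint g₂ hg₂ hc (by linarith)
  refine ⟨c, φ₁, φ₂, hc.le, h1₁, h1₂, fun a => ?_, fun a => ?_, fun a => ?_⟩
  · exact (Complex.nonneg_iff.1 (hpos₁ _ (star_mul_self_nonneg a))).imp_right Eq.symm
  · exact (Complex.nonneg_iff.1 (hpos₂ _ (star_mul_self_nonneg a))).imp_right Eq.symm
  · calc φ' a = f.complexifyOfSelfAdjoint a := by
          rw [LinearMap.complexifyOfSelfAdjoint_selfAdjointRe _ hsa]; rfl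
      _ = g₁.complexifyOfSelfAdjoint a - g₂.complexifyOfSelfAdjoint a := by
          rw [← hsub, LinearMap.complexifyOfSelfAdjoint_sub]; rfl
      _ = c * (φ₁ a - φ₂ a) := by rw [← hφ₁, ← hφ₂]; ring
end
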